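/- arXiv:1609.03305 — 3 statements merged into one kernel-verified Lean document; each statement's English description precedes it below -/
import Mathlib

section
/- Let p > 3 be prime, E : y² = x³ + Ax + B a nonsingular elliptic curve over 𝔽_p, G = (x_G, y_G) ∈ E(𝔽_p), W₀ ∈ E(𝔽_p), and x_n = x(nG ⊕ W₀) for n ≥ 1 with W_n ≠ ±G and W_n, W_{n±1} ≠ 𝒪 for n = 2,…,6. Suppose x₁,…,x₇ are pairwise distinct. Then the vectors v₁ = (x_i² + x_i(x_{i−1}+x_{i+1}))_{i=2..6}, v₂ = (x_{i−1}+x_{i+1})_{i=2..6}, v₃ = (x_i)_{i=2..6}, v₄ = (1,1,1,1,1) in 𝔽_p⁵ are linearly independent over 𝔽_p. -/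
/-- The elliptic curve `y² = x³ + Ax + B` in affine Weierstrass form. -/
def Ecurve {k : Type*} [CommRing k] (A B : k) : WeierstrassCurve.Affine k :=
  { a₁ := 0, a₂ := 0, a₃ := 0, a₄ := A, a₆ := B }

/-- The x-coordinate of a nonsingular point, with the convention `x(𝒪) = 0`. -/
def xcoord {k : Type*} [Field k] {W : WeierstrassCurve.Affine k} : W.Point → k
  | .zero => 0
  | @WeierstrassCurve.Affine.Point.some _ _ _ x _ _ => x

/-!
Write `G = (a, b)`. Adding and subtracting `G` from a point `Q` with x-coordinate `t ≠ a` gives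
`x(Q + G) + x(Q - G) = 2(t³ + At + B + b²)/(t - a)² - 2(t + a)`, so the neighbour sums
`x_{i-1} + x_{i+1}` are rational functions of `x_i` with denominator `(x_i - a)²`.
Clearing that denominator turns a linear relation between the four vectors into a polynomial
of degree at most four vanishing at the five distinct points `x_2, …, x_6`, hence into the
vanishing of its five coefficients. That linear system forces the relation to be trivial
unless `3a² + A = 0` and `b = 0`, i.e. unless `G` is a singular point.
-/

open WeierstrassCurve.Affine

section Curve

variable {k : Type*} [Field k] {A B : k}

lemma Ecurve_equation_iff {x y : k} :
    (Ecurve A B).Equation x y ↔ y ^ 2 = x ^ 3 + A * x + B := by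
  simp [equation_iff, Ecurve]

lemma Ecurve_nonsingular_iff {x y : k} :
    (Ecurve A B).Nonsingular x y ↔
      y ^ 2 = x ^ 3 + A * x + B ∧ (3 * x ^ 2 + A ≠ 0 ∨ 2 * y ≠ 0) := by
  rw [nonsingular_iff', Ecurve_equation_iff]
  simp only [Ecurve, zero_mul, mul_zero, zero_sub, add_zero, neg_ne_zero]

@[simp]
lemma xcoord_some {W : WeierstrassCurve.Affine k} {x y : k} (h : W.Nonsingular x y) :
    xcoord (.some _ _ h) = x :=
  rfl

lemma xcoord_neg_add_add_xcoord_add [DecidableEq k] {a b : k} (hG : (Ecurve A B).Nonsingular a b)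
    {Q : (Ecurve A B).Point} (hQ : Q ≠ 0) (hQG : Q ≠ .some _ _ hG) (hQG' : Q ≠ -.some _ _ hG) :
    (xcoord (-.some _ _ hG + Q) + xcoord (.some _ _ hG + Q) + 2 * (xcoord Q + a)) *
        (xcoord Q - a) ^ 2 =
      2 * (xcoord Q ^ 3 + A * xcoord Q + B) + 2 * b ^ 2 := by
  rcases Q with _ | @⟨t, y, hty⟩
  · exact absurd rfl hQ
  have hx : a ≠ t := fun h => (Point.X_eq_iff.mp h.symm).elim hQG hQG'
  have hy := (Ecurve_nonsingular_iff.mp hty).1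
  have hadd : xcoord (.some _ _ hG + .some _ _ hty) = ((b - y) / (a - t)) ^ 2 - a - t := by
    rw [Point.add_of_X_ne hx, xcoord_some, addX, slope_of_X_ne hx]
    simp [Ecurve]
  have hsub : xcoord (-.some _ _ hG + .some _ _ hty) = ((-b - y) / (a - t)) ^ 2 - a - t := by
    rw [Point.neg_some, Point.add_of_X_ne hx, xcoord_some, addX, slope_of_X_ne hx]
    simp [negY, Ecurve]
  have hta : a - t ≠ 0 := sub_ne_zero.mpr hx
  rw [hadd, hsub, xcoord_some]
  field_simp
  linear_combination 2 * (a - t) ^ 2 * hy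

end Curve

section Algebra

variable {k : Type*} [Field k]

/-- Coefficients (constant term first) of `(g₀X + g₁)·R(X) + (g₀X² + g₂X + g₃)(X - a)²`, where
`R(X) = 2(X³ + AX + B + b²) - 2(X + a)(X - a)²` is what `(X - a)²(x_{i-1} + x_{i+1})` becomes at
`X = x_i`: this quartic is the linear relation `g₀v₁ + g₁v₂ + g₂v₃ + g₃v₄` times `(X - a)²`. -/
def quarticCoeff (A B a b : k) (g : Fin 4 → k) : Fin 5 → k :=
  ![a ^ 2 * g 3 + 2 * (B + b ^ 2 - a ^ 3) * g 1,
    -2 * a * g 3 + a ^ 2 * g 2 + 2 * (B + b ^ 2 - a ^ 3) * g 0 + 2 * (A + a ^ 2) * g 1,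
    g 3 - 2 * a * g 2 + (2 * A + 3 * a ^ 2) * g 0 + 2 * a * g 1,
    g 2,
    g 0]

lemma sum_quarticCoeff_mul_pow_eq_zero {A B a b t u : k}
    (hrel : (u + 2 * (t + a)) * (t - a) ^ 2 = 2 * (t ^ 3 + A * t + B) + 2 * b ^ 2)
    {g : Fin 4 → k} (hg : g 0 * (t ^ 2 + t * u) + g 1 * u + g 2 * t + g 3 = 0) :
    ∑ j, quarticCoeff A B a b g j * t ^ (j : ℕ) = 0 := by
  simp only [Fin.sum_univ_five, quarticCoeff, Matrix.cons_val, Fin.coe_ofNat_eq_mod, Nat.reduceMod]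
  linear_combination (t - a) ^ 2 * hg - (g 0 * t + g 1) * hrel

lemma eq_zero_of_quarticCoeff_eq_zero (h2 : (2 : k) ≠ 0) {A B a b : k}
    (hG : (Ecurve A B).Nonsingular a b) {g : Fin 4 → k} (hc : quarticCoeff A B a b g = 0) :
    g = 0 := by
  obtain ⟨hab, hsmooth⟩ := Ecurve_nonsingular_iff.mp hG
  simp only [quarticCoeff, Matrix.cons_eq_zero_iff] at hc
  obtain ⟨hc0, hc1, hc2, hc3, hc4, -⟩ := hc
  have hg1 : g 1 = 0 := by
    by_contra hg1
    have hA : 3 * a ^ 2 + A = 0 := by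
      have h : 2 * (3 * a ^ 2 + A) * g 1 = 0 := by
        linear_combination hc1 + 2 * a * hc2 + 3 * a ^ 2 * hc3 -
          (2 * (B + b ^ 2 - a ^ 3) + 2 * a * (2 * A + 3 * a ^ 2)) * hc4
      exact (mul_eq_zero.mp ((mul_eq_zero.mp h).resolve_right hg1)).resolve_left h2
    have hb : 2 * b = 0 := by
      have h : (2 * b) ^ 2 * g 1 = 0 := by
        linear_combination hc0 - a ^ 2 * hc2 - 2 * a ^ 3 * hc3 + a ^ 2 * (2 * A + 3 * a ^ 2) * hc4 +
          2 * g 1 * hab + 2 * a * g 1 * hA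
      exact pow_eq_zero_iff two_ne_zero |>.mp ((mul_eq_zero.mp h).resolve_right hg1)
    exact hsmooth.elim (· hA) (· hb)
  have hg3 : g 3 = 0 := by
    linear_combination hc2 + 2 * a * hc3 - (2 * A + 3 * a ^ 2) * hc4 - 2 * a * hg1
  ext i
  fin_cases i <;> assumption

lemma linearIndependent_of_forall_mul_sq_eq {ι : Type*} [Fintype ι] (hι : 5 ≤ Fintype.card ι)
    (h2 : (2 : k) ≠ 0) {A B a b : k} (hG : (Ecurve A B).Nonsingular a b) {t u : ι → k}
    (ht : Function.Injective t)
    (hrel : ∀ i, (u i + 2 * (t i + a)) * (t i - a) ^ 2 = 2 * (t i ^ 3 + A * t i + B) + 2 * b ^ 2) :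
    LinearIndependent k ![fun i => t i ^ 2 + t i * u i, u, t, fun _ => 1] := by
  obtain ⟨e⟩ : Nonempty (Fin 5 ↪ ι) := Function.Embedding.nonempty_of_card_le (by simpa using hι)
  rw [Fintype.linearIndependent_iff]
  intro g hg
  suffices g = 0 by simp [this]
  refine eq_zero_of_quarticCoeff_eq_zero h2 hG <|
    Matrix.eq_zero_of_forall_index_sum_mul_pow_eq_zero (ht.comp e.injective) fun j =>
      sum_quarticCoeff_mul_pow_eq_zero (hrel (e j)) ?_
  simpa [Fin.sum_univ_four, add_assoc] using congrFun hg (e j)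

end Algebra

theorem stmt7_general (p : ℕ) [Fact p.Prime] (hp : 3 < p)
    (A B : ZMod p)
    (G W₀ : (Ecurve A B).Point)
    (Wn : ℕ → (Ecurve A B).Point) (hWn : ∀ n, Wn n = n • G + W₀)
    (xs : ℕ → ZMod p) (hxs : ∀ n, xs n = xcoord (Wn n))
    (hG : ∀ n, 2 ≤ n → n ≤ 6 → Wn n ≠ G ∧ Wn n ≠ -G)
    (hO : ∀ n, 1 ≤ n → n ≤ 7 → Wn n ≠ 0)
    (hdist : ∀ i j, 1 ≤ i → i ≤ 7 → 1 ≤ j → j ≤ 7 → i ≠ j → xs i ≠ xs j) :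
    LinearIndependent (ZMod p)
      ![fun i : Fin 5 => xs ((i : ℕ) + 2) ^ 2 +
          xs ((i : ℕ) + 2) * (xs ((i : ℕ) + 1) + xs ((i : ℕ) + 3)),
        fun i : Fin 5 => xs ((i : ℕ) + 1) + xs ((i : ℕ) + 3),
        fun i : Fin 5 => xs ((i : ℕ) + 2),
        fun _ : Fin 5 => (1 : ZMod p)] := by
  have h2 : (2 : ZMod p) ≠ 0 := Ring.two_ne_zero (by rw [ZMod.ringChar_zmod_n]; omega)
  have hsucc : ∀ n, Wn (n + 1) = G + Wn n := fun n => by rw [hWn, hWn, succ_nsmul', add_assoc]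
  rcases G with _ | @⟨a, b, hab⟩
  · refine absurd ?_ <|
      hdist 2 3 (by norm_num) (by norm_num) (by norm_num) (by norm_num) (by norm_num)
    rw [hxs, hxs, show Wn 3 = _ from hsucc 2]
    exact congrArg xcoord (zero_add _).symm
  have hrel : ∀ i : Fin 5, (xs (i + 1) + xs (i + 3) + 2 * (xs (i + 2) + a)) * (xs (i + 2) - a) ^ 2 =
      2 * (xs (i + 2) ^ 3 + A * xs (i + 2) + B) + 2 * b ^ 2 := by
    rintro ⟨i, hi⟩
    have hprev : Wn (i + 1) = -.some _ _ hab + Wn (i + 2) := by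
      rw [hsucc (i + 1), neg_add_cancel_left]
    have hnext : Wn (i + 3) = .some _ _ hab + Wn (i + 2) := hsucc (i + 2)
    rw [hxs, hxs, hxs, hprev, hnext]
    exact xcoord_neg_add_add_xcoord_add hab (hO _ (by omega) (by omega))
      (hG _ (by omega) (by omega)).1 (hG _ (by omega) (by omega)).2
  refine linearIndependent_of_forall_mul_sq_eq (by simp) h2 hab (fun i j hij => ?_) hrel
  by_contra hne
  exact hdist _ _ (by omega) (by omega) (by omega) (by omega) (by omega) hij

/-- Lemma 1 of the paper: for the elliptic curve congruential generator
`x_n = x(nG ⊕ W₀)` over `𝔽_p` (`p > 3`, nonsingular curve, `Wₙ ≠ ±G` for `n = 2,…,6`,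
`Wₙ ≠ 𝒪` for `n = 1,…,7`) with `x₁,…,x₇` pairwise distinct, the four vectors
`v₁ = (xᵢ² + xᵢ(xᵢ₋₁+xᵢ₊₁))ᵢ`, `v₂ = (xᵢ₋₁+xᵢ₊₁)ᵢ`, `v₃ = (xᵢ)ᵢ`, `v₄ = (1,…,1)` in
`𝔽_p⁵` (`i = 2,…,6`) are linearly independent over `𝔽_p`. -/
theorem stmt7 (p : ℕ) [Fact p.Prime] (hp : 3 < p)
    (A B : ZMod p)
    (hΔ : 4 * A ^ 3 + 27 * B ^ 2 ≠ 0)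
    (G W₀ : (Ecurve A B).Point)
    (Wn : ℕ → (Ecurve A B).Point) (hWn : ∀ n, Wn n = n • G + W₀)
    (xs : ℕ → ZMod p) (hxs : ∀ n, xs n = xcoord (Wn n))
    (hG : ∀ n, 2 ≤ n → n ≤ 6 → Wn n ≠ G ∧ Wn n ≠ -G)
    (hO : ∀ n, 1 ≤ n → n ≤ 7 → Wn n ≠ 0)
    (hdist : ∀ i j, 1 ≤ i → i ≤ 7 → 1 ≤ j → j ≤ 7 → i ≠ j → xs i ≠ xs j) :
    LinearIndependent (ZMod p)
      ![fun i : Fin 5 => xs ((i : ℕ) + 2) ^ 2 +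
          xs ((i : ℕ) + 2) * (xs ((i : ℕ) + 1) + xs ((i : ℕ) + 3)),
        fun i : Fin 5 => xs ((i : ℕ) + 1) + xs ((i : ℕ) + 3),
        fun i : Fin 5 => xs ((i : ℕ) + 2),
        fun _ : Fin 5 => (1 : ZMod p)] :=
  stmt7_general p hp A B G W₀ Wn hWn xs hxs hG hO hdist
end

section
/- Let p > 3 be prime and E : y² = x³ + Ax + B over 𝔽_p with 4A³ + 27B² ≠ 0. Let G = (x_G, y_G), W₀ ∈ E(𝔽_p), and set W_n = nG ⊕ W₀, x_n = x(W_n). Suppose W_i ≠ ±G and W_{i−1}, W_i, W_{i+1} ≠ 𝒪 for some i ≥ 2. Then (2x_i² + 2x_i(x_{i−1}+x_{i+1}))·x_G + (2x_i − (x_{i−1}+x_{i+1}))·x_G² + 2x_i·A + 2B + 2y_G² − 2x_G³ = (x_{i−1}+x_{i+1})·x_i² in 𝔽_p. -/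
/-!
Since `W ⊕ G` and `W ⊕ (−G)` are the third points on the chords through `W` and `±G`, their
x-coordinates are `λ±² − x_W − x_G` with `λ± = (y_W ∓ y_G)/(x_W − x_G)`. Adding them, the cross
terms cancel and `λ₊² + λ₋² = 2(y_W² + y_G²)/(x_W − x_G)²`; replacing `y_W²` by `x_W³ + A x_W + B`
and clearing the denominator gives a relation that is linear in `x_G, x_G², A, B, y_G², x_G³`.
-/

open WeierstrassCurve.Affine

namespace Ecurve

variable {F : Type*} [Field F] {A B : F}

lemma xcoord_some {x y : F} (h : (Ecurve A B).Nonsingular x y) :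
    xcoord (Point.some _ _ h) = x :=
  rfl

lemma equation_iff (x y : F) : (Ecurve A B).Equation x y ↔ y ^ 2 = x ^ 3 + A * x + B := by
  rw [WeierstrassCurve.Affine.equation_iff]
  simp [Ecurve]

variable [DecidableEq F]

lemma sq_sub_mul_xcoord_add_add_xcoord_neg_add {xP yP xQ yQ : F}
    (hP : (Ecurve A B).Nonsingular xP yP) (hQ : (Ecurve A B).Nonsingular xQ yQ) (hx : xP ≠ xQ) :
    (xQ - xP) ^ 2 * (xcoord (Point.some _ _ hP + Point.some _ _ hQ) +
        xcoord (-Point.some _ _ hP + Point.some _ _ hQ)) =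
      2 * (xQ ^ 3 + A * xQ + B + yP ^ 2) - 2 * (xQ + xP) * (xQ - xP) ^ 2 := by
  rw [Point.neg_some, Point.add_of_X_ne hx, Point.add_of_X_ne hx, xcoord_some, xcoord_some]
  simp only [addX, negY, slope_of_X_ne hx, Ecurve]
  field_simp
  linear_combination 2 * (xQ - xP) ^ 2 * (equation_iff xQ yQ).mp hQ.1

theorem linear_relation_xcoord_add_neg_add {xP yP : F} (hP : (Ecurve A B).Nonsingular xP yP)
    {W : (Ecurve A B).Point} (hW : W ≠ 0) (hWP : W ≠ Point.some _ _ hP)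
    (hWnP : W ≠ -Point.some _ _ hP) :
    let s := xcoord (Point.some _ _ hP + W) + xcoord (-Point.some _ _ hP + W)
    (2 * xcoord W ^ 2 + 2 * xcoord W * s) * xP + (2 * xcoord W - s) * xP ^ 2 +
        2 * xcoord W * A + 2 * B + 2 * yP ^ 2 - 2 * xP ^ 3 = s * xcoord W ^ 2 := by
  rcases W with _ | ⟨xW, yW, hW'⟩
  · exact absurd rfl hW
  have hx : xP ≠ xW := by
    rw [Ne, Point.X_eq_iff (h₁ := hP) (h₂ := hW'), not_or]
    exact ⟨Ne.symm hWP, fun h => hWnP (by rw [h, neg_neg])⟩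
  intro s
  have hs := sq_sub_mul_xcoord_add_add_xcoord_neg_add hP hW' hx
  simp only [s, xcoord_some] at hs ⊢
  linear_combination -hs

end Ecurve

theorem stmt11_general (p : ℕ) [Fact p.Prime]
    (A B x_G y_G : ZMod p)
    (hGns : (Ecurve A B).Nonsingular x_G y_G)
    (G W₀ : (Ecurve A B).Point)
    (hGdef : G = WeierstrassCurve.Affine.Point.some _ _ hGns)
    (Wn : ℕ → (Ecurve A B).Point) (hWn : ∀ n, Wn n = n • G + W₀)
    (xs : ℕ → ZMod p) (hxs : ∀ n, xs n = xcoord (Wn n))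
    (i : ℕ) (hi : 2 ≤ i)
    (hWG : Wn i ≠ G ∧ Wn i ≠ -G)
    (hO : Wn (i - 1) ≠ 0 ∧ Wn i ≠ 0 ∧ Wn (i + 1) ≠ 0) :
    (2 * xs i ^ 2 + 2 * xs i * (xs (i - 1) + xs (i + 1))) * x_G +
        (2 * xs i - (xs (i - 1) + xs (i + 1))) * x_G ^ 2 +
        2 * xs i * A + 2 * B + 2 * y_G ^ 2 - 2 * x_G ^ 3 =
      (xs (i - 1) + xs (i + 1)) * xs i ^ 2 := by
  have hsucc : Wn (i + 1) = G + Wn i := by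
    rw [hWn, hWn, succ_nsmul]
    abel
  have hpred : Wn (i - 1) = -G + Wn i := by
    obtain ⟨k, rfl⟩ : ∃ k, i = k + 1 := ⟨i - 1, by omega⟩
    rw [hWn, hWn, Nat.add_sub_cancel, succ_nsmul]
    abel
  subst hGdef
  rw [hxs, hxs, hxs, hsucc, hpred, add_comm (xcoord _)]
  exact Ecurve.linear_relation_xcoord_add_neg_add hGns hO.2.1 hWG.1 hWG.2

/-- The linear relation (equation (7) of the paper) satisfied by the secret parameters:
for the generator `x_n = x(nG ⊕ W₀)` over `𝔽_p` (`p > 3`, `4A³ + 27B² ≠ 0`), if `i ≥ 2`,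
`W_i ≠ ±G` and `W_{i−1}, W_i, W_{i+1} ≠ 𝒪`, then
`(2x_i² + 2x_i(x_{i−1}+x_{i+1}))x_G + (2x_i − (x_{i−1}+x_{i+1}))x_G² + 2x_iA + 2B + 2y_G²`
`− 2x_G³ = (x_{i−1}+x_{i+1})x_i²` in `𝔽_p`. -/
theorem stmt11 (p : ℕ) [Fact p.Prime] (hp : 3 < p)
    (A B x_G y_G : ZMod p)
    (hΔ : 4 * A ^ 3 + 27 * B ^ 2 ≠ 0)
    (hGns : (Ecurve A B).Nonsingular x_G y_G)
    (G W₀ : (Ecurve A B).Point)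
    (hGdef : G = WeierstrassCurve.Affine.Point.some _ _ hGns)
    (Wn : ℕ → (Ecurve A B).Point) (hWn : ∀ n, Wn n = n • G + W₀)
    (xs : ℕ → ZMod p) (hxs : ∀ n, xs n = xcoord (Wn n))
    (i : ℕ) (hi : 2 ≤ i)
    (hWG : Wn i ≠ G ∧ Wn i ≠ -G)
    (hO : Wn (i - 1) ≠ 0 ∧ Wn i ≠ 0 ∧ Wn (i + 1) ≠ 0) :
    (2 * xs i ^ 2 + 2 * xs i * (xs (i - 1) + xs (i + 1))) * x_G +
        (2 * xs i - (xs (i - 1) + xs (i + 1))) * x_G ^ 2 +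
        2 * xs i * A + 2 * B + 2 * y_G ^ 2 - 2 * x_G ^ 3 =
      (xs (i - 1) + xs (i + 1)) * xs i ^ 2 :=
  stmt11_general p A B x_G y_G hGns G W₀ hGdef Wn hWn xs hxs i hi hWG hO
end

section
/- Let k be a field of characteristic ≠ 2,3, and let x_G, y_G, A, B ∈ k with y_G² = x_G³ + Ax_G + B and 4A³ + 27B² ≠ 0. Suppose α₁, α₂, α₃, α₄ ∈ k are such that the polynomial F(X) = α₁(X²(X−x_G)² + 2X·g(X)) + 2α₂·g(X) + α₃X(X−x_G)² + α₄(X−x_G)², where g(X) = X³ + AX + B + y_G² − (X+x_G)(X−x_G)², is the zero polynomial. Then α₁ = α₂ = α₃ = α₄ = 0. -/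
open Polynomial

lemma quartic_coeffs_eq_zero {k : Type*} [Field k] (a b c d e : k)
    (h : C a * X ^ 4 + C b * X ^ 3 + C c * X ^ 2 + C d * X + C e = (0 : k[X])) :
    a = 0 ∧ b = 0 ∧ c = 0 ∧ d = 0 ∧ e = 0 := by
  refine ⟨?_, ?_, ?_, ?_, ?_⟩
  · have := congrArg (fun p => p.coeff 4) h
    simpa only [coeff_add, coeff_C_mul, coeff_X_pow, coeff_X, coeff_C, coeff_zero,
      if_true, if_false, mul_one, mul_zero, add_zero, zero_add,
      show ¬((4:ℕ) = 3) by norm_num, show ¬((4:ℕ) = 2) by norm_num, show ¬((4:ℕ) = 1) by norm_num,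
      show ¬((4:ℕ) = 0) by norm_num, show ¬((1:ℕ) = 4) by norm_num, ite_false, ite_true] using this
  · have := congrArg (fun p => p.coeff 3) h
    simpa only [coeff_add, coeff_C_mul, coeff_X_pow, coeff_X, coeff_C, coeff_zero,
      mul_one, mul_zero, add_zero, zero_add,
      show ¬((3:ℕ) = 4) by norm_num, show ((3:ℕ) = 3) by norm_num,
      show ¬((3:ℕ) = 2) by norm_num, show ¬((3:ℕ) = 1) by norm_num,
      show ¬((3:ℕ) = 0) by norm_num, show ¬((1:ℕ) = 3) by norm_num, ite_false, ite_true] using this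
  · have := congrArg (fun p => p.coeff 2) h
    simpa only [coeff_add, coeff_C_mul, coeff_X_pow, coeff_X, coeff_C, coeff_zero,
      mul_one, mul_zero, add_zero, zero_add,
      show ¬((2:ℕ) = 4) by norm_num, show ¬((2:ℕ) = 3) by norm_num,
      show ((2:ℕ) = 2) by norm_num, show ¬((2:ℕ) = 1) by norm_num,
      show ¬((2:ℕ) = 0) by norm_num, show ¬((1:ℕ) = 2) by norm_num, ite_false, ite_true] using this
  · have := congrArg (fun p => p.coeff 1) h
    simpa only [coeff_add, coeff_C_mul, coeff_X_pow, coeff_X, coeff_C, coeff_zero,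
      mul_one, mul_zero, add_zero, zero_add,
      show ¬((1:ℕ) = 4) by norm_num, show ¬((1:ℕ) = 3) by norm_num,
      show ¬((1:ℕ) = 2) by norm_num, show ((1:ℕ) = 1) by norm_num,
      show ¬((1:ℕ) = 0) by norm_num, ite_false, ite_true] using this
  · have := congrArg (fun p => p.coeff 0) h
    simpa only [coeff_add, coeff_C_mul, coeff_X_pow, coeff_X, coeff_C, coeff_zero,
      mul_one, mul_zero, add_zero, zero_add,
      show ¬((0:ℕ) = 4) by norm_num, show ¬((0:ℕ) = 3) by norm_num,
      show ¬((0:ℕ) = 2) by norm_num, show ¬((0:ℕ) = 1) by norm_num,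
      show ((0:ℕ) = 0) by norm_num, show ¬((1:ℕ) = 0) by norm_num, ite_false, ite_true] using this

/-- Core of the proof of Lemma 1: if `(x_G, y_G)` lies on the nonsingular curve
`y² = x³ + Ax + B` (char `k ≠ 2, 3`, `4A³ + 27B² ≠ 0`) and the polynomial
`F(X) = α₁(X²(X−x_G)² + 2X·g(X)) + 2α₂·g(X) + α₃X(X−x_G)² + α₄(X−x_G)²` with
`g(X) = X³ + AX + B + y_G² − (X+x_G)(X−x_G)²` is the zero polynomial, then
`α₁ = α₂ = α₃ = α₄ = 0`. -/
theorem stmt19 {k : Type*} [Field k] (h2 : (2 : k) ≠ 0) (h3 : (3 : k) ≠ 0)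
    (A B x_G y_G α₁ α₂ α₃ α₄ : k)
    (hG : y_G ^ 2 = x_G ^ 3 + A * x_G + B)
    (hΔ : 4 * A ^ 3 + 27 * B ^ 2 ≠ 0)
    (g F : k[X])
    (hg : g = X ^ 3 + C A * X + C B + C (y_G ^ 2) - (X + C x_G) * (X - C x_G) ^ 2)
    (hF : F = C α₁ * (X ^ 2 * (X - C x_G) ^ 2 + 2 * X * g) + C (2 * α₂) * g +
      C α₃ * (X * (X - C x_G) ^ 2) + C α₄ * (X - C x_G) ^ 2)
    (hF0 : F = 0) :
    α₁ = 0 ∧ α₂ = 0 ∧ α₃ = 0 ∧ α₄ = 0 := by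
  have key : C α₁ * X ^ 4 + C α₃ * X ^ 3
      + C (α₁ * (3 * x_G ^ 2 + 2 * A) + 2 * α₂ * x_G - 2 * x_G * α₃ + α₄) * X ^ 2
      + C (2 * α₁ * (A * x_G + 2 * B) + 2 * α₂ * (A + x_G ^ 2) + α₃ * x_G ^ 2
            - 2 * x_G * α₄) * X
      + C (2 * α₂ * (A * x_G + 2 * B) + α₄ * x_G ^ 2) = 0 := by
    rw [← hF0, hF, hg, hG]
    simp only [map_add, map_mul, map_sub, map_ofNat, map_pow]
    ring
  obtain ⟨c4, c3, c2, c1, c0⟩ := quartic_coeffs_eq_zero _ _ _ _ _ key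
  subst c4 c3
  have hα₂ : α₂ = 0 := by
    by_contra hα₂
    have h2α₂ : 2 * α₂ ≠ 0 := mul_ne_zero h2 hα₂
    have hA' : 2 * α₂ * (A + 3 * x_G ^ 2) = 0 := by linear_combination c1 + 2 * x_G * c2
    have hA : A = -(3 * x_G ^ 2) := by
      have h := (mul_eq_zero.mp hA').resolve_left h2α₂
      linear_combination h
    have hB' : 2 * α₂ * (2 * B - 4 * x_G ^ 3) = 0 := by
      linear_combination c0 - x_G ^ 2 * c2 - 2 * α₂ * x_G * hA
    have hB : B = 2 * x_G ^ 3 := by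
      have h := (mul_eq_zero.mp hB').resolve_left h2α₂
      apply mul_left_cancel₀ h2
      linear_combination h
    exact hΔ (by rw [hA, hB]; ring)
  subst hα₂
  have hα₄ : α₄ = 0 := by linear_combination c2
  exact ⟨rfl, rfl, rfl, hα₄⟩
end
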